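/- arXiv:2301.13424 — 2 statements merged into one kernel-verified Lean document; each statement's English description precedes it below -/
import Mathlib

section
/- Assume μ satisfies Assumption (A) and that Ω⁻ is nonempty, and let ρ = ρ(Ω⁻) be the inradius of Ω⁻. Then for every a ∈ (0, ρ) there exists a constant c > 0 such that for all sufficiently large n, the probability that ρ_n ≥ a is at least 1 − e^{−cn}, where ρ_n is the inradius of Λ_n. -/
open MeasureTheory ProbabilityTheory Filter Metric

/-- Logarithmic potential of a measure on ℂ. -/
noncomputable def logPot (μ : Measure ℂ) (z : ℂ) : ℝ :=
  ∫ w, Real.log ‖z - w‖ ∂μ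

/-- Topological support of a measure on ℂ. -/
def msupport (μ : Measure ℂ) : Set ℂ :=
  {x : ℂ | ∀ U ∈ nhds x, 0 < μ U}

/-- Assumption (A): for every compact `K`, `sup_{z ∈ K} ∫ (log|z-w|)² dμ(w) < ∞`. -/
def AssumptionA (μ : Measure ℂ) : Prop :=
  ∀ K : Set ℂ, IsCompact K → ∃ C : ℝ, ∀ z ∈ K,
    ∫⁻ w, ENNReal.ofReal ((Real.log ‖z - w‖) ^ 2) ∂μ ≤ ENNReal.ofReal C

/-- Assumption (D): `μ(B(z,r)) ≤ C rᵉ` for all `z` and `r > 0`. -/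
def AssumptionD (μ : Measure ℂ) : Prop :=
  ∃ C : ℝ, ∃ ε : ℝ, 0 < ε ∧ ∀ z : ℂ, ∀ r : ℝ, 0 < r →
    μ (Metric.ball z r) ≤ ENNReal.ofReal (C * r ^ ε)

/-- The filled unit lemniscate of `p_n(z) = ∏_{k<n} (z - X k ω)`. -/
def lemniscate {Ω : Type*} (X : ℕ → Ω → ℂ) (n : ℕ) (ω : Ω) : Set ℂ :=
  {z : ℂ | ‖∏ k ∈ Finset.range n, (z - X k ω)‖ < 1}

/-- Inradius of a planar set: the sup of radii of open disks contained in it (0 if none). -/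
noncomputable def inradius (U : Set ℂ) : ℝ :=
  sSup {r : ℝ | 0 < r ∧ ∃ c : ℂ, Metric.ball c r ⊆ U}

/-!
Truncating the kernel at a scale `s > 0` gives `log (max s |z - w|)`, which dominates
`log |z - w|`, is `1/s`-Lipschitz in `z`, and is bounded for `w` in the compact support of `μ`.
Since `log |z - ·|` is integrable by (A), dominated convergence shows that the truncated potential
`U^s(z)` is still negative at a point of `Ω⁻` once `s` is small. Compactness covers a closed disk
of radius `a` inside `Ω⁻` by finitely many disks `B(g, s_g |U^{s_g}(g)| / 2)`. By Hoeffding's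
inequality, outside an event of probability `O(e^{-cn})`, every centre satisfies
`∑ₖ log (max s_g |g - X_k|) < n U^{s_g}(g) / 2`; the Lipschitz bound then keeps
`∑ₖ log (max s_g |z - X_k|)`, which dominates `log |p_n(z)|`, negative on the whole disk
around `g`. So the disk of radius `a` lies in `Λ_n`, which is bounded, and `ρ_n ≥ a`.
-/

open Real Set Finset

noncomputable def truncLog (s : ℝ) (z w : ℂ) : ℝ := log (max s ‖z - w‖)

section TruncLog

variable {s : ℝ}

@[fun_prop]
lemma measurable_truncLog (s : ℝ) (z : ℂ) : Measurable (truncLog s z) := by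
  unfold truncLog; fun_prop

lemma truncLog_le_max_log (s : ℝ) (z w : ℂ) : truncLog s z w ≤ max (log ‖z - w‖) (log s) := by
  rcases max_choice s ‖z - w‖ with h | h <;> simp [truncLog, h]

lemma truncLog_mem_Icc (hs : 0 < s) {z w : ℂ} {D : ℝ} (h : ‖z - w‖ ≤ D) :
    truncLog s z w ∈ Icc (log s) (log (s + D)) :=
  ⟨log_le_log hs (le_max_left _ _),
    log_le_log (hs.trans_le (le_max_left _ _))
      (max_le (by linarith [(norm_nonneg _).trans h]) (by linarith))⟩

lemma truncLog_le_add (hs : 0 < s) (z₁ z₂ w : ℂ) :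
    truncLog s z₁ w ≤ truncLog s z₂ w + ‖z₁ - z₂‖ / s := by
  set A := max s ‖z₁ - w‖
  set B := max s ‖z₂ - w‖
  have hB : s ≤ B := le_max_left _ _
  have hAB : A - B ≤ ‖z₁ - z₂‖ := by
    calc A - B ≤ |‖z₁ - w‖ - ‖z₂ - w‖| := by
          simpa only [A, B, max_comm s] using (abs_max_sub_max_le_abs _ _ s).trans' (le_abs_self _)
      _ ≤ ‖z₁ - z₂‖ := by simpa using abs_norm_sub_norm_le (z₁ - w) (z₂ - w)
  have hlog : log A - log B ≤ (A - B) / B := by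
    rw [← log_div (hs.trans_le (le_max_left _ _)).ne' (hs.trans_le hB).ne', sub_div,
      div_self (hs.trans_le hB).ne']
    exact log_le_sub_one_of_pos (div_pos (hs.trans_le (le_max_left _ _)) (hs.trans_le hB))
  have : (A - B) / B ≤ ‖z₁ - z₂‖ / s := by
    rcases le_total (A - B) 0 with h | h
    · exact (div_nonpos_of_nonpos_of_nonneg h (hs.trans_le hB).le).trans (by positivity)
    · exact div_le_div₀ (norm_nonneg _) hAB hs hB
  simp only [truncLog]
  linarith

lemma norm_prod_sub_le_exp_sum_truncLog (hs : 0 < s) (z : ℂ) (x : ℕ → ℂ) (n : ℕ) :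
    ‖∏ k ∈ range n, (z - x k)‖ ≤ exp (∑ k ∈ range n, truncLog s z (x k)) := by
  rw [norm_prod, exp_sum]
  refine prod_le_prod (fun _ _ => norm_nonneg _) fun k _ => ?_
  rw [truncLog, exp_log (hs.trans_le (le_max_left _ _))]
  exact le_max_right _ _

lemma ball_subset_setOf_norm_prod_sub_lt_one (hs : 0 < s) {g : ℂ} {x : ℕ → ℂ} {n : ℕ} {m : ℝ}
    (h : ∑ k ∈ range n, truncLog s g (x k) < n * (m / 2)) :
    ball g (s * -m / 2) ⊆ {z | ‖∏ k ∈ range n, (z - x k)‖ < 1} := by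
  intro z hz
  have hzg : ‖z - g‖ / s ≤ -m / 2 := by
    rw [mem_ball, dist_eq_norm] at hz
    rw [div_le_iff₀ hs]
    linarith
  have hsum : ∑ k ∈ range n, truncLog s z (x k) < 0 :=
    calc ∑ k ∈ range n, truncLog s z (x k)
        ≤ ∑ k ∈ range n, (truncLog s g (x k) + ‖z - g‖ / s) :=
          sum_le_sum fun k _ => truncLog_le_add hs z g (x k)
      _ = ∑ k ∈ range n, truncLog s g (x k) + n * (‖z - g‖ / s) := by
          rw [sum_add_distrib, sum_const, card_range, nsmul_eq_mul]
      _ < n * (m / 2) + n * (-m / 2) :=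
          add_lt_add_of_lt_of_le h (mul_le_mul_of_nonneg_left hzg n.cast_nonneg)
      _ = 0 := by ring
  exact (norm_prod_sub_le_exp_sum_truncLog hs z x n).trans_lt (exp_lt_one_iff.2 hsum)

end TruncLog

section Inradius

lemma le_inradius_of_ball_subset {U : Set ℂ} (hU : Bornology.IsBounded U) {c : ℂ} {r : ℝ}
    (hr : 0 < r) (h : ball c r ⊆ U) : r ≤ inradius U := by
  refine le_csSup ⟨diam U / 2, ?_⟩ ⟨hr, c, h⟩
  rintro r' ⟨hr', c', h'⟩
  have := (diam_ball_eq c' hr'.le).symm.trans_le (diam_mono h' hU)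
  linarith

lemma exists_closedBall_subset_of_lt_inradius {U : Set ℂ} {a : ℝ} (ha : 0 ≤ a)
    (h : a < inradius U) : ∃ c, closedBall c a ⊆ U := by
  have hne : {r : ℝ | 0 < r ∧ ∃ c : ℂ, ball c r ⊆ U}.Nonempty := by
    by_contra hemp
    rw [Set.not_nonempty_iff_eq_empty] at hemp
    rw [inradius, hemp, Real.sSup_empty] at h
    linarith
  obtain ⟨r, ⟨-, c, hc⟩, har⟩ := exists_lt_of_lt_csSup hne h
  exact ⟨c, (closedBall_subset_ball har).trans hc⟩

lemma setOf_norm_prod_sub_lt_one_subset_closedBall (x : ℕ → ℂ) (n : ℕ) :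
    {z | ‖∏ k ∈ range n, (z - x k)‖ < 1} ⊆ closedBall 0 (∑ k ∈ range n, ‖x k‖ + 1) := by
  intro z hz
  by_contra hout
  rw [mem_closedBall, dist_zero_right, not_le] at hout
  refine (show ‖∏ k ∈ range n, (z - x k)‖ < 1 from hz).not_ge ?_
  rw [norm_prod]
  refine one_le_prod fun k hk => ?_
  have := single_le_sum (fun j _ => norm_nonneg (x j)) hk
  linarith [norm_sub_norm_le z (x k)]

lemma le_inradius_of_sum_truncLog_lt {T : Finset ℂ} {s m : ℂ → ℝ} (hs : ∀ g ∈ T, 0 < s g)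
    {x : ℕ → ℂ} {n : ℕ} (h : ∀ g ∈ T, ∑ k ∈ range n, truncLog (s g) g (x k) < n * (m g / 2))
    {c : ℂ} {a : ℝ} (ha : 0 < a) (hcover : closedBall c a ⊆ ⋃ g ∈ T, ball g (s g * -m g / 2)) :
    a ≤ inradius {z | ‖∏ k ∈ range n, (z - x k)‖ < 1} :=
  le_inradius_of_ball_subset
    (isBounded_closedBall.subset (setOf_norm_prod_sub_lt_one_subset_closedBall x n)) ha
    (ball_subset_closedBall.trans (hcover.trans (iUnion₂_subset fun g hg =>
      ball_subset_setOf_norm_prod_sub_lt_one (hs g hg) (h g hg))))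

end Inradius

lemma tendsto_integral_max_neg_natCast {α : Type*} [MeasurableSpace α] {μ : Measure α}
    [IsFiniteMeasure μ] {f : α → ℝ} (hf : Integrable f μ) :
    Tendsto (fun m : ℕ => ∫ x, max (f x) (-m) ∂μ) atTop (nhds (∫ x, f x ∂μ)) := by
  refine tendsto_integral_of_dominated_convergence (fun x => |f x|)
    (fun m => (hf.sup (integrable_const _)).aestronglyMeasurable) hf.abs
    (fun m => ae_of_all _ fun x => ?_) (ae_of_all _ fun x => ?_)
  · rw [Real.norm_eq_abs, abs_le]
    exact ⟨(neg_abs_le _).trans (le_max_left _ _),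
      max_le (le_abs_self _) ((neg_nonpos.2 m.cast_nonneg).trans (abs_nonneg _))⟩
  · refine tendsto_const_nhds.congr' ((eventually_ge_atTop ⌈-f x⌉₊).mono fun m hm => ?_)
    have : -f x ≤ m := (Nat.le_ceil _).trans (Nat.cast_le.2 hm)
    exact (max_eq_left (by linarith)).symm

noncomputable def truncLogPot (μ : Measure ℂ) (s : ℝ) (z : ℂ) : ℝ := ∫ w, truncLog s z w ∂μ

section Potential

variable {μ : Measure ℂ}

lemma ae_mem_msupport (μ : Measure ℂ) : ∀ᵐ w ∂μ, w ∈ msupport μ := by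
  have : msupport μ = μ.support := by
    ext x; exact (Measure.mem_support_iff_forall x).symm
  exact this ▸ Measure.support_mem_ae

lemma integrable_log_norm_sub [IsFiniteMeasure μ] (hA : AssumptionA μ) (z : ℂ) :
    Integrable (fun w => log ‖z - w‖) μ := by
  obtain ⟨C, hC⟩ := hA {z} isCompact_singleton
  have hmeas : AEStronglyMeasurable (fun w => log ‖z - w‖) μ :=
    (by fun_prop : Measurable fun w => log ‖z - w‖).aestronglyMeasurable
  have hsq : Integrable (fun w => (log ‖z - w‖) ^ 2) μ :=
    ⟨hmeas.pow 2, (hasFiniteIntegral_iff_ofReal (ae_of_all _ fun _ => sq_nonneg _)).2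
      ((hC z rfl).trans_lt ENNReal.ofReal_lt_top)⟩
  exact ((memLp_two_iff_integrable_sq hmeas).2 hsq).integrable one_le_two

variable {R s : ℝ} (hR : msupport μ ⊆ closedBall 0 R)
include hR

lemma ae_truncLog_mem_Icc (hs : 0 < s) (z : ℂ) :
    ∀ᵐ w ∂μ, truncLog s z w ∈ Icc (log s) (log (s + (‖z‖ + R))) := by
  filter_upwards [ae_mem_msupport μ] with w hw
  refine truncLog_mem_Icc hs ((norm_sub_le z w).trans ?_)
  simpa using hR hw

lemma integrable_truncLog [IsFiniteMeasure μ] (hs : 0 < s) (z : ℂ) : Integrable (truncLog s z) μ :=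
  Integrable.of_mem_Icc _ _ (measurable_truncLog s z).aemeasurable (ae_truncLog_mem_Icc hR hs z)

lemma exists_truncLogPot_neg [IsFiniteMeasure μ] (hA : AssumptionA μ) {z : ℂ}
    (hz : logPot μ z < 0) : ∃ s > 0, truncLogPot μ s z < 0 := by
  have hint := integrable_log_norm_sub hA z
  obtain ⟨m, hm⟩ := ((tendsto_integral_max_neg_natCast hint).eventually_lt_const hz).exists
  refine ⟨exp (-m), exp_pos _, lt_of_le_of_lt ?_ hm⟩
  refine integral_mono (integrable_truncLog hR (exp_pos _) z)
    (hint.sup (integrable_const _)) fun w => ?_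
  simpa using truncLog_le_max_log (exp (-m)) z w

lemma exists_finset_cover_truncLogPot_neg [IsFiniteMeasure μ] (hA : AssumptionA μ) {K : Set ℂ}
    (hK : IsCompact K) (hneg : K ⊆ {z | logPot μ z < 0}) :
    ∃ (T : Finset ℂ) (s : ℂ → ℝ), (∀ g ∈ T, 0 < s g ∧ truncLogPot μ (s g) g < 0) ∧
      K ⊆ ⋃ g ∈ T, ball g (s g * -truncLogPot μ (s g) g / 2) := by
  choose! s hs hsneg using fun z (hz : z ∈ K) => exists_truncLogPot_neg hR hA (hneg hz)
  obtain ⟨T, hTK, hcover⟩ := hK.elim_nhds_subcover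
    (fun g => ball g (s g * -truncLogPot μ (s g) g / 2))
    fun z hz => ball_mem_nhds z (div_pos (mul_pos (hs z hz) (neg_pos.2 (hsneg z hz))) two_pos)
  exact ⟨T, s, fun g hg => ⟨hs g (hTK g hg), hsneg g (hTK g hg)⟩, hcover⟩

end Potential

section Hoeffding

variable {Ω E : Type*} [MeasurableSpace Ω] [MeasurableSpace E] {P : Measure Ω}
  [IsProbabilityMeasure P] {μ : Measure E} {X : ℕ → Ω → E}

theorem measureReal_sum_comp_ge_le (hmeas : ∀ i, Measurable (X i))
    (hid : ∀ i, P.map (X i) = μ) (hindep : iIndepFun X P) {f : E → ℝ} (hf : Measurable f)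
    {lo hi : ℝ} (hb : ∀ᵐ w ∂μ, f w ∈ Icc lo hi) {t : ℝ} (ht : μ[f] ≤ t) (n : ℕ) :
    P.real {ω | n * t ≤ ∑ k ∈ range n, f (X k ω)} ≤
      exp (-(2 * n * (t - μ[f]) ^ 2 / (hi - lo) ^ 2)) := by
  have hmean (k : ℕ) : ∫ ω, f (X k ω) ∂P = ∫ w, f w ∂μ := by
    rw [← hid k, integral_map (hmeas k).aemeasurable hf.aestronglyMeasurable]
  set m := ∫ w, f w ∂μ
  have hsubG : ∀ k, HasSubgaussianMGF (fun ω => f (X k ω) - m) ((‖hi - lo‖₊ / 2) ^ 2) P := by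
    intro k
    have := hasSubgaussianMGF_of_mem_Icc (X := fun ω => f (X k ω))
      (hf.comp (hmeas k)).aemeasurable (ae_of_ae_map (hmeas k).aemeasurable ((hid k).symm ▸ hb))
    rwa [hmean k] at this
  have hindep' : iIndepFun (fun k ω => f (X k ω) - m) P :=
    hindep.comp (fun (_ : ℕ) (x : E) => f x - m) fun _ => hf.sub_const _
  have h := HasSubgaussianMGF.measure_sum_range_ge_le_of_iIndepFun (n := n) hindep'
    (fun k _ => hsubG k)
    (mul_nonneg n.cast_nonneg (sub_nonneg.2 ht))
  convert h using 3
  · ext ω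
    simp only [sum_sub_distrib, sum_const, card_range, nsmul_eq_mul]
    constructor <;> intro <;> linarith
  · simp only [NNReal.coe_pow, NNReal.coe_div, coe_nnnorm, Real.norm_eq_abs, NNReal.coe_ofNat]
    rw [div_pow, sq_abs]
    rcases eq_or_ne (n : ℝ) 0 with hn | hn
    · simp [hn]
    · field_simp

end Hoeffding

lemma exists_pos_measure_sum_truncLog_ge_le {Ω : Type*} [MeasurableSpace Ω] {P : Measure Ω}
    [IsProbabilityMeasure P] {μ : Measure ℂ} {X : ℕ → Ω → ℂ} (hmeas : ∀ i, Measurable (X i))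
    (hid : ∀ i, P.map (X i) = μ) (hindep : iIndepFun X P) {R : ℝ} (hR0 : 0 < R)
    (hR : msupport μ ⊆ closedBall 0 R) {s : ℝ} (hs : 0 < s) {g : ℂ}
    (hg : truncLogPot μ s g < 0) :
    ∃ c > 0, ∀ n : ℕ, P {ω | n * (truncLogPot μ s g / 2) ≤ ∑ k ∈ range n, truncLog s g (X k ω)}
      ≤ ENNReal.ofReal (exp (-c * n)) := by
  unfold truncLogPot at *
  set m := ∫ w, truncLog s g w ∂μ
  have hlohi : log s < log (s + (‖g‖ + R)) := log_lt_log hs (by linarith [norm_nonneg g])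
  refine ⟨2 * (m / 2 - m) ^ 2 / (log (s + (‖g‖ + R)) - log s) ^ 2,
    div_pos (mul_pos two_pos (pow_pos (by linarith) 2)) (pow_pos (sub_pos.2 hlohi) 2), fun n => ?_⟩
  rw [← ofReal_measureReal]
  refine ENNReal.ofReal_le_ofReal <| (measureReal_sum_comp_ge_le hmeas hid hindep
    (measurable_truncLog s g) (ae_truncLog_mem_Icc hR hs g) (by linarith : m ≤ m / 2) n).trans_eq ?_
  simp only [m]
  ring_nf

lemma exists_pos_eventually_sum_exp_le {ι : Type*} (T : Finset ι) {c : ι → ℝ}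
    (hc : ∀ i ∈ T, 0 < c i) :
    ∃ c' > 0, ∀ᶠ n : ℕ in atTop, ∑ i ∈ T, exp (-c i * n) ≤ exp (-c' * n) := by
  obtain ⟨c₀, hc₀, hle⟩ : ∃ c₀ > 0, ∀ i ∈ T, c₀ ≤ c i := by
    rcases T.eq_empty_or_nonempty with rfl | hT
    · exact ⟨1, one_pos, by simp⟩
    · exact ⟨T.inf' hT c, (T.lt_inf'_iff hT).2 hc, fun i hi => T.inf'_le c hi⟩
  refine ⟨c₀ / 2, half_pos hc₀, ?_⟩
  have hlim : Tendsto (fun n : ℕ => #T * exp (-(c₀ / 2 * n))) atTop (nhds 0) := by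
    simpa using (tendsto_exp_neg_atTop_nhds_zero.comp
      (tendsto_natCast_atTop_atTop.const_mul_atTop (half_pos hc₀))).const_mul (#T : ℝ)
  filter_upwards [hlim.eventually (ge_mem_nhds one_pos)] with n hn
  calc ∑ i ∈ T, exp (-c i * n) ≤ ∑ i ∈ T, exp (-c₀ * n) :=
        sum_le_sum fun i hi =>
          exp_le_exp.2 (mul_le_mul_of_nonneg_right (neg_le_neg (hle i hi)) n.cast_nonneg)
    _ = #T * exp (-(c₀ / 2 * n)) * exp (-(c₀ / 2) * n) := by
        rw [sum_const, nsmul_eq_mul, mul_assoc, ← exp_add]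
        ring_nf
    _ ≤ exp (-(c₀ / 2) * n) := mul_le_of_le_one_left (exp_pos _).le hn

lemma one_sub_ofReal_sum_le_measure_compl_biUnion {Ω ι : Type*} [MeasurableSpace Ω]
    {P : Measure Ω} [IsProbabilityMeasure P] (T : Finset ι) {A : ι → Set Ω} {b : ι → ℝ}
    (hb : ∀ i ∈ T, 0 ≤ b i) (hA : ∀ i ∈ T, P (A i) ≤ ENNReal.ofReal (b i)) :
    1 - ENNReal.ofReal (∑ i ∈ T, b i) ≤ P (⋃ i ∈ T, A i)ᶜ := by
  rw [ENNReal.ofReal_sum_of_nonneg hb, compl_eq_univ_sdiff, ← measure_univ (μ := P)]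
  exact (tsub_le_tsub_left ((measure_biUnion_finset_le T A).trans (sum_le_sum hA)) _).trans
    le_measure_sdiff

theorem statement2_general
    {Ω : Type*} [MeasurableSpace Ω] (P : Measure Ω) [IsProbabilityMeasure P]
    (μ : Measure ℂ) [IsProbabilityMeasure μ] (hS : IsCompact (msupport μ))
    (hA : AssumptionA μ)
    (X : ℕ → Ω → ℂ) (hmeas : ∀ i, Measurable (X i))
    (hid : ∀ i, Measure.map (X i) P = μ)
    (hindep : iIndepFun X P)
    (a : ℝ) (ha : 0 < a) (ha' : a < inradius {z : ℂ | logPot μ z < 0}) :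
    ∃ c > (0 : ℝ), ∀ᶠ n : ℕ in atTop,
      1 - ENNReal.ofReal (Real.exp (-c * n)) ≤
        P {ω | a ≤ inradius (lemniscate X n ω)} := by
  obtain ⟨R, hR0, hR⟩ := hS.isBounded.subset_closedBall_lt 0 0
  obtain ⟨ctr, hK⟩ := exists_closedBall_subset_of_lt_inradius ha.le ha'
  obtain ⟨T, s, hT, hcover⟩ :=
    exists_finset_cover_truncLogPot_neg hR hA (isCompact_closedBall ctr a) hK
  choose! c hc hbad using fun g (hg : g ∈ T) =>
    exists_pos_measure_sum_truncLog_ge_le hmeas hid hindep hR0 hR (hT g hg).1 (hT g hg).2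
  obtain ⟨c', hc', hsum⟩ := exists_pos_eventually_sum_exp_le T hc
  refine ⟨c', hc', hsum.mono fun n hn => ?_⟩
  set bad : ℂ → Set Ω := fun g =>
    {ω | n * (truncLogPot μ (s g) g / 2) ≤ ∑ k ∈ range n, truncLog (s g) g (X k ω)}
  have hgood : (⋃ g ∈ T, bad g)ᶜ ⊆ {ω | a ≤ inradius (lemniscate X n ω)} := fun ω hω =>
    le_inradius_of_sum_truncLog_lt (fun g hg => (hT g hg).1)
      (fun g hg => not_le.1 fun h => hω (mem_iUnion₂.2 ⟨g, hg, h⟩)) ha hcover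
  calc 1 - ENNReal.ofReal (exp (-c' * n))
      ≤ 1 - ENNReal.ofReal (∑ g ∈ T, exp (-c g * n)) :=
        tsub_le_tsub_left (ENNReal.ofReal_le_ofReal hn) 1
    _ ≤ P (⋃ g ∈ T, bad g)ᶜ :=
        one_sub_ofReal_sum_le_measure_compl_biUnion T (fun g _ => (exp_pos _).le)
          fun g hg => hbad g hg n
    _ ≤ _ := measure_mono hgood

theorem statement2
    {Ω : Type*} [MeasurableSpace Ω] (P : Measure Ω) [IsProbabilityMeasure P]
    (μ : Measure ℂ) [IsProbabilityMeasure μ] (hS : IsCompact (msupport μ))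
    (hA : AssumptionA μ)
    (X : ℕ → Ω → ℂ) (hmeas : ∀ i, Measurable (X i))
    (hid : ∀ i, Measure.map (X i) P = μ)
    (hindep : iIndepFun X P)
    (hneg : Set.Nonempty {z : ℂ | logPot μ z < 0})
    (a : ℝ) (ha : 0 < a) (ha' : a < inradius {z : ℂ | logPot μ z < 0}) :
    ∃ c > (0 : ℝ), ∀ᶠ n : ℕ in atTop,
      1 - ENNReal.ofReal (Real.exp (-c * n)) ≤
        P {ω | a ≤ inradius (lemniscate X n ω)} :=
  statement2_general P μ hS hA X hmeas hid hindep a ha ha'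
end

section
/- Assume μ satisfies Assumption (A) and let L be a nonempty compact subset of Ω⁺ with L ∩ S = ∅. Then there exists a constant C₀ > 0 such that for all z ∈ L and all sufficiently large n, the probability that log|p_n(z)| ≤ 1 is at most e^{−C₀ n}. -/
open MeasureTheory ProbabilityTheory Filter Metric

/-!
For `z ∈ L` the summands `log ‖z - X k‖` of `log ‖p_n(z)‖` are independent, bounded (the compact
set `L` keeps a positive distance from the compact support of `μ`) and have mean `logPot μ z`.
The potential is continuous off the support, so it has a positive minimum `m` on `L`, and
Hoeffding's inequality for summands with values in `[a, b]` bounds `P(∑ log ‖z - X k‖ ≤ 1)` by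
`exp (-(n m - 1)² / (2 n c))` with `c = ((b - a) / 2)²`, which is at most `exp (-(m² / 8c) n)`
as soon as `n m ≥ 2`.
-/

lemma msupport_eq_support (μ : Measure ℂ) : msupport μ = μ.support := by
  ext x
  exact (Measure.mem_support_iff_forall x).symm

lemma exists_log_norm_sub_mem_Icc {E : Type*} [NormedAddCommGroup E] {K T : Set E}
    (hK : IsCompact K) (hT : IsCompact T) (hKT : Disjoint K T) :
    ∃ a b : ℝ, a < b ∧ ∀ z ∈ K, ∀ w ∈ T, Real.log ‖z - w‖ ∈ Set.Icc a b := by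
  obtain ⟨r, hr, hsep⟩ := exists_pos_forall_lt_edist hK hT.isClosed hKT
  obtain ⟨R, hR⟩ := isBounded_iff.1 (hK.isBounded.union hT.isBounded)
  refine ⟨Real.log r, max (Real.log r) (Real.log R) + 1,
    by linarith [le_max_left (Real.log r) (Real.log R)], fun z hz w hw => ?_⟩
  have hr_lt : (r : ℝ) < ‖z - w‖ := by
    rw [← dist_eq_norm, ← coe_nndist]
    exact_mod_cast edist_nndist z w ▸ hsep z hz w hw
  have hle_R : ‖z - w‖ ≤ R := dist_eq_norm z w ▸ hR (Or.inl hz) (Or.inr hw)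
  have hlog_R := Real.log_le_log ((NNReal.coe_pos.2 hr).trans hr_lt) hle_R
  exact ⟨Real.log_le_log hr hr_lt.le, by linarith [le_max_right (Real.log r) (Real.log R)]⟩

lemma continuousOn_logPot_compl_msupport (μ : Measure ℂ) [IsFiniteMeasure μ]
    (hS : IsCompact (msupport μ)) :
    ContinuousOn (logPot μ) (msupport μ)ᶜ := by
  rw [msupport_eq_support] at hS ⊢
  set S := μ.support
  refine Measure.isOpen_compl_support.continuousOn_iff.2 fun x₀ hx₀ => ?_
  obtain ⟨δ, hδ, hball⟩ := Metric.isOpen_iff.1 Measure.isOpen_compl_support x₀ hx₀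
  -- truncating `‖z - w‖` at `δ / 2` makes the integrand continuous without changing it near `x₀`
  set g : ℂ → ℂ → ℝ := fun z w => Real.log (max ‖z - w‖ (δ / 2))
  have hg : Continuous (∫ w in S, g · w ∂μ) := by
    refine continuous_parametric_integral_of_continuous ?_ hS
    exact Continuous.log (by fun_prop) fun p => (lt_max_of_lt_right (half_pos hδ)).ne'
  refine hg.continuousAt.congr ?_
  filter_upwards [ball_mem_nhds x₀ (half_pos hδ)] with z hz
  have hμS : μ.restrict S = μ := Measure.restrict_eq_self_of_ae_mem Measure.support_mem_ae
  rw [logPot]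
  conv_rhs => rw [← hμS]
  refine setIntegral_congr_fun (Measure.isClosed_support (μ := μ)).measurableSet fun w hw => ?_
  have hw' : δ ≤ dist x₀ w := not_lt.1 fun h => hball (mem_ball'.2 h) hw
  have : δ / 2 ≤ ‖z - w‖ := by
    rw [← dist_eq_norm]
    linarith [dist_triangle x₀ z w, dist_comm x₀ z, mem_ball.1 hz]
  simp only [g, max_eq_left this]

section RandomPolynomial

variable {Ω : Type*} [MeasurableSpace Ω] {P : Measure Ω} [IsProbabilityMeasure P]

lemma measureReal_sum_range_le_le_exp_of_mem_Icc {Y : ℕ → Ω → ℝ} (hY : iIndepFun Y P)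
    (hYm : ∀ k, AEMeasurable (Y k) P) {a b m s : ℝ} (hYab : ∀ k, ∀ᵐ ω ∂P, Y k ω ∈ Set.Icc a b)
    (hm : ∀ k, m ≤ P[Y k]) {n : ℕ} (hs : s ≤ n * m) :
    P.real {ω | ∑ k ∈ Finset.range n, Y k ω ≤ s} ≤
      Real.exp (-(n * m - s) ^ 2 / (2 * n * ((b - a) / 2) ^ 2)) := by
  set Z : ℕ → Ω → ℝ := fun k ω => P[Y k] - Y k ω
  have hZ : iIndepFun Z P := hY.comp (fun k (y : ℝ) => (∫ ω, Y k ω ∂P) - y) fun k => by fun_prop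
  have hZsub : ∀ k < n, HasSubgaussianMGF (Z k) ((‖b - a‖₊ / 2) ^ 2) P := fun k _ =>
    (hasSubgaussianMGF_of_mem_Icc (hYm k) (hYab k)).neg.congr
      (ae_of_all _ fun ω => by simp [Z])
  calc P.real {ω | ∑ k ∈ Finset.range n, Y k ω ≤ s}
      ≤ P.real {ω | n * m - s ≤ ∑ k ∈ Finset.range n, Z k ω} := by
        refine measureReal_mono fun ω hω => ?_
        have : (n : ℝ) * m ≤ ∑ k ∈ Finset.range n, P[Y k] := by
          simpa using Finset.card_nsmul_le_sum (Finset.range n) _ m fun k _ => hm k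
        simp only [Set.mem_ofPred_eq, Z, Finset.sum_sub_distrib] at hω ⊢
        linarith
    _ ≤ _ := by
        have := HasSubgaussianMGF.measure_sum_range_ge_le_of_iIndepFun hZ hZsub (sub_nonneg.2 hs)
        rwa [NNReal.coe_pow, NNReal.coe_div, coe_nnnorm, Real.norm_eq_abs, div_pow, sq_abs,
          ← div_pow] at this

lemma measureReal_log_norm_prod_le_le_exp {μ : Measure ℂ} {X : ℕ → Ω → ℂ}
    (hmeas : ∀ i, Measurable (X i)) (hid : ∀ i, Measure.map (X i) P = μ)
    (hindep : iIndepFun X P) {z : ℂ} (hz : μ {z} = 0)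
    {a b m s : ℝ} (hab : ∀ᵐ w ∂μ, Real.log ‖z - w‖ ∈ Set.Icc a b) (hm : m ≤ logPot μ z)
    {n : ℕ} (hs : s ≤ n * m) :
    P.real {ω | Real.log ‖∏ k ∈ Finset.range n, (z - X k ω)‖ ≤ s} ≤
      Real.exp (-(n * m - s) ^ 2 / (2 * n * ((b - a) / 2) ^ 2)) := by
  have hf : Measurable fun w : ℂ => Real.log ‖z - w‖ := by fun_prop
  have hae : ∀ {p : ℂ → Prop}, (∀ᵐ w ∂μ, p w) → ∀ k, ∀ᵐ ω ∂P, p (X k ω) := fun h k =>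
    ae_of_ae_map (hmeas k).aemeasurable (hid k ▸ h)
  have hne : ∀ᵐ ω ∂P, ∀ k, z - X k ω ≠ 0 := by
    refine ae_all_iff.2 (hae (p := fun w => z - w ≠ 0) ?_)
    filter_upwards [compl_mem_ae_iff.2 hz] with w hw
    exact sub_ne_zero.2 (Ne.symm hw)
  have hmean : ∀ k, m ≤ ∫ ω, Real.log ‖z - X k ω‖ ∂P := fun k => by
    rwa [← integral_map (hmeas k).aemeasurable hf.aestronglyMeasurable, hid k]
  calc P.real {ω | Real.log ‖∏ k ∈ Finset.range n, (z - X k ω)‖ ≤ s}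
      = P.real {ω | ∑ k ∈ Finset.range n, Real.log ‖z - X k ω‖ ≤ s} := by
        refine measureReal_congr ?_
        filter_upwards [hne] with ω hω
        change (_ ≤ s) = (_ ≤ s)
        rw [Complex.norm_prod, Real.log_prod fun k _ => norm_ne_zero_iff.2 (hω k)]
    _ ≤ _ := measureReal_sum_range_le_le_exp_of_mem_Icc
        (hindep.comp (fun _ w => Real.log ‖z - w‖) fun _ => hf)
        (fun k => (hf.comp (hmeas k)).aemeasurable) (hae hab) hmean hs

end RandomPolynomial

lemma neg_sq_sub_one_div_le {x m c : ℝ} (hc : 0 < c) (hm : 0 < m) (hx : 2 ≤ x * m) :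
    -(x * m - 1) ^ 2 / (2 * x * c) ≤ -(m ^ 2 / (8 * c)) * x := by
  have hx0 : 0 < x := pos_of_mul_pos_left (by linarith) hm.le
  rw [neg_div, neg_mul, neg_le_neg_iff, le_div_iff₀ (by positivity)]
  have : m ^ 2 / (8 * c) * x * (2 * x * c) = (x * m) ^ 2 / 4 := by field_simp; ring
  rw [this]
  nlinarith

theorem statement13_general
    {Ω : Type*} [MeasurableSpace Ω] (P : Measure Ω) [IsProbabilityMeasure P]
    (μ : Measure ℂ) [IsProbabilityMeasure μ] (hS : IsCompact (msupport μ))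
    (X : ℕ → Ω → ℂ) (hmeas : ∀ i, Measurable (X i))
    (hid : ∀ i, Measure.map (X i) P = μ)
    (hindep : iIndepFun X P)
    (L : Set ℂ) (hL : IsCompact L) (hLne : L.Nonempty)
    (hLsub : L ⊆ {z : ℂ | 0 < logPot μ z}) (hLS : L ∩ msupport μ = ∅) :
    ∃ C₀ > (0 : ℝ), ∀ z ∈ L, ∀ᶠ n : ℕ in atTop,
      P {ω | Real.log ‖∏ k ∈ Finset.range n, (z - X k ω)‖ ≤ 1} ≤
        ENNReal.ofReal (Real.exp (-C₀ * n)) := by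
  have hLS' : Disjoint L (msupport μ) := Set.disjoint_iff_inter_eq_empty.2 hLS
  obtain ⟨a, b, hab, hlog⟩ := exists_log_norm_sub_mem_Icc hL hS hLS'
  obtain ⟨z₀, hz₀, hmin⟩ :=
    hL.exists_isMinOn hLne ((continuousOn_logPot_compl_msupport μ hS).mono hLS'.subset_compl_right)
  have hm : 0 < logPot μ z₀ := hLsub hz₀
  have hc : 0 < ((b - a) / 2) ^ 2 := by have := sub_pos.2 hab; positivity
  refine ⟨logPot μ z₀ ^ 2 / (8 * ((b - a) / 2) ^ 2), by positivity, fun z hz => ?_⟩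
  have hsupp : ∀ᵐ w ∂μ, w ∈ msupport μ := msupport_eq_support μ ▸ Measure.support_mem_ae
  have hz_null : μ {z} = 0 :=
    measure_mono_null (Set.singleton_subset_iff.2 (hLS'.notMem_of_mem_left hz))
      (msupport_eq_support μ ▸ Measure.measure_compl_support)
  filter_upwards [eventually_ge_atTop ⌈2 / logPot μ z₀⌉₊] with n hn
  have hn_large : 2 ≤ n * logPot μ z₀ := (div_le_iff₀ hm).1 (Nat.ceil_le.1 hn)
  rw [← ofReal_measureReal]
  refine ENNReal.ofReal_le_ofReal ((measureReal_log_norm_prod_le_le_exp hmeas hid hindep hz_null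
    (hsupp.mono fun w hw => hlog z hz w hw) (hmin hz) (by linarith)).trans ?_)
  exact Real.exp_le_exp.2 (neg_sq_sub_one_div_le hc hm hn_large)

theorem statement13
    {Ω : Type*} [MeasurableSpace Ω] (P : Measure Ω) [IsProbabilityMeasure P]
    (μ : Measure ℂ) [IsProbabilityMeasure μ] (hS : IsCompact (msupport μ))
    (hA : AssumptionA μ)
    (X : ℕ → Ω → ℂ) (hmeas : ∀ i, Measurable (X i))
    (hid : ∀ i, Measure.map (X i) P = μ)
    (hindep : iIndepFun X P)
    (L : Set ℂ) (hL : IsCompact L) (hLne : L.Nonempty)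
    (hLsub : L ⊆ {z : ℂ | 0 < logPot μ z}) (hLS : L ∩ msupport μ = ∅) :
    ∃ C₀ > (0 : ℝ), ∀ z ∈ L, ∀ᶠ n : ℕ in atTop,
      P {ω | Real.log ‖∏ k ∈ Finset.range n, (z - X k ω)‖ ≤ 1} ≤
        ENNReal.ofReal (Real.exp (-C₀ * n)) :=
  statement13_general P μ hS X hmeas hid hindep L hL hLne hLsub hLS
end
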